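/- For all integers x ≥ 1 and m ≥ x+1, if c′ ∈ C(m+1,x) starts, from the left, with 0 followed by x+1 ones (Group 2), and c denotes the binary word formed by the m rightmost bits of c′, then c ∈ C(m,x) and 2·(g(m,x,c) − g(m+1,x,c′)) = N(m,x) − N(m−x,x); that is, the shift in codeword indices for Group 2 is ζ₂ = −(1/2)(N(m,x) − N(m−x,x)). -/

import Mathlib

/-!
A codeword of length `m + 1` preceding `c' = 0 c` starts with `0`, so it is `0 d` for a codeword
`d < c` of length `m` that is not *blocked*, i.e. does not start with `1^y 0` for some `y ≤ x`.
Every blocked codeword precedes `c = 1^(x+1) …`, so `g(c) - g(c')` is the number of blocked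
codewords. By the symmetry `d ↦ ¬d`, `N(m)` is twice the number of codewords starting with `1`;
these are either blocked or start with `1^(x+1)`, and the latter correspond, by deleting the
leading `x` ones, to the codewords of length `m - x` starting with `1`. Hence
`N(m) = N(m - x) + 2 (g(c) - g(c'))`.
-/

/-- `noForbidden m x c` says the binary word `c = (c_{m-1}, …, c_0)` contains no contiguous
subword of the form `0 1^y 0` or `1 0^y 1` for any `1 ≤ y ≤ x`. -/
def noForbidden (m x : ℕ) (c : Fin m → Bool) : Prop :=
  ∀ j y : ℕ, 1 ≤ y → y ≤ x → (h : j + y + 1 < m) →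
    ¬ ((∀ k, 1 ≤ k → (hk : k ≤ y) → c ⟨j + k, by omega⟩ = ! c ⟨j, by omega⟩) ∧
        c ⟨j + y + 1, h⟩ = c ⟨j, by omega⟩)

/-- `N(m, x)`: the cardinality of the LOCO code `C(m, x)`. -/
noncomputable def locoN (m x : ℕ) : ℕ := Nat.card {c : Fin m → Bool // noForbidden m x c}

/-- `N(k, x)` extended to integer `k` by the convention `N(k, x) = 2` for `k ≤ 1`. -/
noncomputable def Nex (k : ℤ) (x : ℕ) : ℤ := if k ≤ 1 then 2 else (locoN k.toNat x : ℤ)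

/-- Strict lexicographic order on binary words, comparing bits from `c_{m-1}`
(most significant) down to `c_0`, with `0 < 1`. -/
def lexLt (m : ℕ) (d c : Fin m → Bool) : Prop :=
  ∃ i : Fin m, d i = false ∧ c i = true ∧ ∀ j : Fin m, (i : ℕ) < (j : ℕ) → d j = c j

/-- The index `g(m, x, c)` of a codeword: the number of codewords of `C(m, x)` that
precede `c` in lexicographic order. -/
noncomputable def locoIdx (m x : ℕ) (c : Fin m → Bool) : ℕ :=
  Nat.card {d : Fin m → Bool // noForbidden m x d ∧ lexLt m d c}

theorem card_and_add_card_and_not {α : Type*} [Finite α] (p q : α → Prop) :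
    Nat.card {a // p a ∧ q a} + Nat.card {a // p a ∧ ¬q a} = Nat.card {a // p a} := by
  classical
  rw [← Nat.card_congr (Equiv.subtypeSubtypeEquivSubtypeInter p q),
    ← Nat.card_congr (Equiv.subtypeSubtypeEquivSubtypeInter p (¬q ·)), ← Nat.card_sum,
    Nat.card_congr (Equiv.sumCompl fun a : {a // p a} => q a)]

theorem Fin.snoc_mk {m : ℕ} {α : Type*} (d : Fin m → α) (b : α) (a : ℕ) (h : a < m + 1) :
    (Fin.snoc d b : Fin (m + 1) → α) ⟨a, h⟩ = if h' : a < m then d ⟨a, h'⟩ else b := by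
  simp [Fin.snoc]

theorem exists_max_false {n : ℕ} {d : Fin n → Bool} {i₀ : Fin n} (h : d i₀ = false) :
    ∃ i, i₀ ≤ i ∧ d i = false ∧ ∀ j, i < j → d j = true := by
  classical
  obtain ⟨i, hi, hmax⟩ :=
    Finset.exists_max_image (Finset.univ.filter (d · = false)) id ⟨i₀, by simpa⟩
  refine ⟨i, hmax i₀ (by simpa), by simpa using hi, fun j hij => ?_⟩
  by_contra hj
  exact absurd (hmax j (by simpa using hj)) (not_le.2 hij)

def OnesFrom {n : ℕ} (k : ℕ) (d : Fin n → Bool) : Prop := ∀ i : Fin n, k ≤ i → d i = true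

theorem onesFrom_sub_one_iff {n : ℕ} {d : Fin n → Bool} (hn : 1 ≤ n) :
    OnesFrom (n - 1) d ↔ d ⟨n - 1, by omega⟩ = true :=
  ⟨fun h => h _ le_rfl, fun h i hi => by
    rwa [show i = ⟨n - 1, by omega⟩ from Fin.ext (by have := i.isLt; simp only; omega)]⟩

theorem lexLt_of_onesFrom {n k : ℕ} {d c : Fin n → Bool} (hc : OnesFrom k c) {i₀ : Fin n}
    (hk : k ≤ i₀) (hd : d i₀ = false) : lexLt n d c := by
  obtain ⟨i, hi, hdi, hmax⟩ := exists_max_false hd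
  have hki : k ≤ i := hk.trans hi
  exact ⟨i, hdi, hc i hki, fun j hj => by rw [hmax j hj, hc j (by omega)]⟩

theorem lexLt_snoc_snoc_iff {m : ℕ} {d c : Fin m → Bool} {b : Bool} :
    lexLt (m + 1) (Fin.snoc d b) (Fin.snoc c b) ↔ lexLt m d c := by
  constructor
  · rintro ⟨i, hdi, hci, hagree⟩
    cases i using Fin.lastCases with
    | last => simp_all
    | cast i =>
      exact ⟨i, by simpa using hdi, by simpa using hci,
        fun j hj => by simpa using hagree j.castSucc hj⟩
  · rintro ⟨i, hdi, hci, hagree⟩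
    refine ⟨i.castSucc, by simpa using hdi, by simpa using hci, fun j hj => ?_⟩
    cases j using Fin.lastCases with
    | last => simp
    | cast j => simpa using hagree j hj

theorem lexLt_snoc_false_right {m : ℕ} {d : Fin (m + 1) → Bool} {c : Fin m → Bool}
    (h : lexLt (m + 1) d (Fin.snoc c false)) : d (Fin.last m) = false := by
  obtain ⟨i, -, hci, hagree⟩ := h
  cases i using Fin.lastCases with
  | last => simp at hci
  | cast i => rw [hagree _ (Fin.castSucc_lt_last i), Fin.snoc_last]

theorem locoIdx_snoc_false (m x : ℕ) (c : Fin m → Bool) :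
    locoIdx (m + 1) x (Fin.snoc c false) =
      Nat.card {d : Fin m → Bool // noForbidden (m + 1) x (Fin.snoc d false) ∧ lexLt m d c} := by
  have snoc_init : ∀ d : Fin (m + 1) → Bool, lexLt (m + 1) d (Fin.snoc c false) →
      Fin.snoc (Fin.init d) false = d := fun d h => by
    rw [← lexLt_snoc_false_right h, Fin.snoc_init_self]
  refine Nat.card_congr
    { toFun := fun d => ⟨Fin.init d.1, ?_⟩
      invFun := fun d => ⟨Fin.snoc d.1 false, d.2.1, lexLt_snoc_snoc_iff.2 d.2.2⟩
      left_inv := fun d => Subtype.ext (snoc_init d.1 d.2.2)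
      right_inv := fun d => Subtype.ext (Fin.init_snoc (α := fun _ => Bool) _ _) }
  rw [← lexLt_snoc_snoc_iff (b := false), snoc_init d.1 d.2.2]
  exact d.2

namespace noForbidden

variable {n x : ℕ} {d : Fin n → Bool}

theorem comp_castLE (h : noForbidden n x d) {k : ℕ} (hk : k ≤ n) :
    noForbidden k x (d ∘ Fin.castLE hk) :=
  fun j y hy hyx hjy hpat => h j y hy hyx (by omega) hpat

theorem not (h : noForbidden n x d) : noForbidden n x (fun i => !d i) := by
  rintro j y hy hyx hjy ⟨hmid, hend⟩
  refine h j y hy hyx hjy ⟨fun k hk hky => ?_, ?_⟩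
  · simpa using hmid k hk hky
  · simpa using hend

theorem of_comp_castLE_of_onesFrom {k : ℕ} (hk : k ≤ n) (hd : OnesFrom (k - 1) d)
    (h : noForbidden k x (d ∘ Fin.castLE hk)) : noForbidden n x d := by
  rintro j y hy hyx hjy ⟨hmid, hend⟩
  by_cases hin : j + y + 1 < k
  · exact h j y hy hyx hin ⟨hmid, hend⟩
  -- a forbidden pattern ends in two distinct bits, so it cannot reach into the ones
  · have hlast := hmid y hy le_rfl
    rw [hd ⟨j + y, by omega⟩ (by simp; omega)] at hlast
    rw [hd ⟨j + y + 1, hjy⟩ (by simp; omega)] at hend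
    simp [← hend] at hlast

end noForbidden

theorem noForbidden_snoc_false_iff {m x : ℕ} {d : Fin m → Bool} :
    noForbidden (m + 1) x (Fin.snoc d false) ↔
      noForbidden m x d ∧ (OnesFrom (m - 1) d → OnesFrom (m - x - 1) d) := by
  constructor
  · intro h
    have hinit := h.comp_castLE (Nat.le_succ m)
    rw [show Fin.castLE (Nat.le_succ m) = Fin.castSucc from rfl, Fin.snoc_comp_castSucc] at hinit
    refine ⟨hinit, fun htop => ?_⟩
    by_contra hnot
    obtain ⟨i₀, hi₀, hdi₀⟩ : ∃ i₀ : Fin m, m - x - 1 ≤ i₀ ∧ d i₀ = false := by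
      simpa [OnesFrom] using hnot
    obtain ⟨i, hi, hdi, hmax⟩ := exists_max_false hdi₀
    have him : (i : ℕ) < m - 1 := by
      by_contra hge
      simp [htop i (by omega)] at hdi
    refine h i (m - 1 - i) (by omega) (by omega) (by omega) ⟨fun k hk hky => ?_, ?_⟩
    · rw [Fin.snoc_mk, Fin.snoc_mk, dif_pos (by omega), dif_pos i.isLt, hdi,
        hmax _ (Fin.mk_lt_mk.2 (by omega))]
      rfl
    · rw [Fin.snoc_mk, Fin.snoc_mk, dif_neg (by omega), dif_pos i.isLt, hdi]
  · rintro ⟨hd, hrun⟩ j y hy hyx hjy ⟨hmid, hend⟩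
    by_cases hin : j + y + 1 < m
    · refine hd j y hy hyx hin ⟨fun k hk hky => ?_, ?_⟩
      · simpa [Fin.snoc_mk, show j + k < m by omega, show j < m by omega] using hmid k hk hky
      · simpa [Fin.snoc_mk, hin, show j < m by omega] using hend
    · have hdj : d ⟨j, by omega⟩ = false := by
        simpa [Fin.snoc_mk, hin, show j < m by omega] using hend.symm
      have htop : d ⟨m - 1, by omega⟩ = true := by
        have := hmid y hy le_rfl
        simp only [Fin.snoc_mk, dif_pos (show j + y < m by omega), dif_pos (show j < m by omega),
          hdj] at this
        rwa [show (⟨m - 1, _⟩ : Fin m) = ⟨j + y, by omega⟩ from Fin.ext (by simp only; omega)]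
      have := hrun ((onesFrom_sub_one_iff (by omega)).2 htop) ⟨j, by omega⟩ (by simp only; omega)
      simp [hdj] at this

def Blocked (m x : ℕ) (d : Fin m → Bool) : Prop :=
  noForbidden m x d ∧ ¬noForbidden (m + 1) x (Fin.snoc d false)

theorem card_noForbidden_onesFrom {n k x : ℕ} (hk : k ≤ n) :
    Nat.card {d : Fin n → Bool // noForbidden n x d ∧ OnesFrom (k - 1) d} =
      Nat.card {e : Fin k → Bool // noForbidden k x e ∧ OnesFrom (k - 1) e} := by
  let pad (e : Fin k → Bool) : Fin n → Bool := fun i => if h : (i : ℕ) < k then e ⟨i, h⟩ else true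
  have pad_comp (e : Fin k → Bool) : pad e ∘ Fin.castLE hk = e := by
    funext i
    simp [pad]
  have pad_onesFrom (e : Fin k → Bool) (he : OnesFrom (k - 1) e) : OnesFrom (k - 1) (pad e) :=
    fun i hi => by
      by_cases h : (i : ℕ) < k
      · simpa [pad, h] using he ⟨i, h⟩ hi
      · simp [pad, h]
  refine Nat.card_congr
    { toFun := fun d => ⟨d.1 ∘ Fin.castLE hk, d.2.1.comp_castLE hk, fun i hi => d.2.2 _ hi⟩
      invFun := fun e => ⟨pad e.1, noForbidden.of_comp_castLE_of_onesFrom hk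
          (pad_onesFrom e.1 e.2.2) (by rw [pad_comp]; exact e.2.1), pad_onesFrom e.1 e.2.2⟩
      left_inv := fun d => Subtype.ext (funext fun i => ?_)
      right_inv := fun e => Subtype.ext (pad_comp e.1) }
  by_cases h : (i : ℕ) < k
  · simp [pad, h]
  · simp [pad, h, d.2.2 i (by omega)]

theorem locoN_eq_two_mul {n : ℕ} (x : ℕ) (hn : 1 ≤ n) :
    locoN n x = 2 * Nat.card {d : Fin n → Bool // noForbidden n x d ∧ OnesFrom (n - 1) d} := by
  have hflip : ∀ d : Fin n → Bool, noForbidden n x d ∧ ¬OnesFrom (n - 1) d ↔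
      noForbidden n x (fun i => !d i) ∧ OnesFrom (n - 1) (fun i => !d i) := fun d => by
    simp only [onesFrom_sub_one_iff hn, Bool.not_eq_true, Bool.not_eq_eq_eq_not, Bool.not_true]
    exact and_congr_left' ⟨noForbidden.not, fun h => by simpa using h.not⟩
  let flip : (Fin n → Bool) ≃ (Fin n → Bool) :=
    Function.Involutive.toPerm (fun d i => !d i) fun d => funext fun i => Bool.not_not (d i)
  rw [locoN, ← card_and_add_card_and_not _ (OnesFrom (n - 1)), two_mul]
  exact congrArg _ (Nat.card_congr (Equiv.subtypeEquiv flip hflip))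

theorem locoN_one (x : ℕ) : locoN 1 x = 2 := by
  have hall : ∀ d : Fin 1 → Bool, noForbidden 1 x d := fun d j y _ _ h => by omega
  rw [locoN, Nat.card_congr (Equiv.subtypeUnivEquiv hall)]
  simp

theorem Nex_natCast {n : ℕ} (x : ℕ) (hn : 1 ≤ n) : Nex n x = locoN n x := by
  unfold Nex
  split_ifs with h
  · rw [show n = 1 by omega, locoN_one]
    rfl
  · simp

theorem locoIdx_eq_locoIdx_snoc_false_add {m x : ℕ} {c : Fin m → Bool}
    (hc : OnesFrom (m - x - 1) c) :
    locoIdx m x c = locoIdx (m + 1) x (Fin.snoc c false) +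
      Nat.card {d : Fin m → Bool // Blocked m x d} := by
  have lexLt_of_blocked (d : Fin m → Bool) (hd : noForbidden m x d)
      (hblocked : ¬noForbidden (m + 1) x (Fin.snoc d false)) : lexLt m d c := by
    obtain ⟨-, hrun⟩ : OnesFrom (m - 1) d ∧ ¬OnesFrom (m - x - 1) d := by
      simpa [noForbidden_snoc_false_iff, hd] using hblocked
    obtain ⟨i, hi, hdi⟩ : ∃ i : Fin m, m - x - 1 ≤ i ∧ d i = false := by
      simpa [OnesFrom] using hrun
    exact lexLt_of_onesFrom hc hi hdi
  rw [locoIdx, locoIdx_snoc_false, ← card_and_add_card_and_not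
    (fun d => noForbidden m x d ∧ lexLt m d c) (fun d => noForbidden (m + 1) x (Fin.snoc d false))]
  congr 1
  · exact Nat.card_congr <| Equiv.subtypeEquivRight fun d =>
      ⟨fun h => ⟨h.2, h.1.2⟩, fun h => ⟨⟨(noForbidden_snoc_false_iff.1 h.1).1, h.2⟩, h.1⟩⟩
  · exact Nat.card_congr <| Equiv.subtypeEquivRight fun d =>
      ⟨fun h => ⟨h.1.1, h.2⟩, fun h => ⟨⟨h.1, lexLt_of_blocked d h.1 h.2⟩, h.2⟩⟩

theorem locoN_eq_locoN_sub_add {m x : ℕ} (hxm : x < m) :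
    locoN m x = locoN (m - x) x +
      2 * Nat.card {d : Fin m → Bool // Blocked m x d} := by
  rw [locoN_eq_two_mul x (by omega : 1 ≤ m), locoN_eq_two_mul x (by omega : 1 ≤ m - x),
    ← card_noForbidden_onesFrom (Nat.sub_le m x), ← mul_add, ← card_and_add_card_and_not
      (fun d => noForbidden m x d ∧ OnesFrom (m - 1) d)
      (fun d => noForbidden (m + 1) x (Fin.snoc d false))]
  congr 2
  · refine Nat.card_congr <| Equiv.subtypeEquivRight fun d => ⟨fun h => ?_, fun h => ?_⟩
    · exact ⟨h.1.1, (noForbidden_snoc_false_iff.1 h.2).2 h.1.2⟩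
    · exact ⟨⟨h.1, fun i hi => h.2 i (by omega)⟩, noForbidden_snoc_false_iff.2 ⟨h.1, fun _ => h.2⟩⟩
  · refine Nat.card_congr <| Equiv.subtypeEquivRight fun d => ⟨fun h => ⟨h.1.1, h.2⟩, fun h => ?_⟩
    refine ⟨⟨h.1, by_contra fun htop => h.2 ?_⟩, h.2⟩
    exact noForbidden_snoc_false_iff.2 ⟨h.1, fun h' => absurd h' htop⟩

/-- For all `x ≥ 1` and `m ≥ x + 1`, if `c' ∈ C(m + 1, x)` starts from the
left with `0` followed by `x + 1` ones (Group 2), and `c` is the word formed by the `m`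
rightmost bits of `c'`, then `c ∈ C(m, x)` and
`2 (g(m, x, c) - g(m + 1, x, c')) = N(m, x) - N(m - x, x)`, i.e. the index shift is
`ζ₂ = -(1/2)(N(m, x) - N(m - x, x))`. -/
theorem loco_group2_shift (m x : ℕ) (hm : x + 1 ≤ m)
    (c' : Fin (m + 1) → Bool) (hc' : noForbidden (m + 1) x c')
    (h0 : c' ⟨m, by omega⟩ = false)
    (h1 : ∀ k, 1 ≤ k → k ≤ x + 1 → c' ⟨m - k, by omega⟩ = true) :
    noForbidden m x (fun i => c' (Fin.castSucc i)) ∧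
    2 * ((locoIdx m x (fun i => c' (Fin.castSucc i)) : ℤ) - (locoIdx (m + 1) x c' : ℤ))
      = Nex (m : ℤ) x - Nex ((m : ℤ) - (x : ℤ)) x := by
  have hc'_snoc : Fin.snoc (Fin.init c') false = c' := by
    rw [← h0]
    exact Fin.snoc_init_self c'
  have hc : OnesFrom (m - x - 1) (Fin.init c') := fun i hi => by
    have := h1 (m - i) (by omega) (by omega)
    rwa [show (⟨m - (m - i), _⟩ : Fin (m + 1)) = Fin.castSucc i from
      Fin.ext (by simp; omega)] at this
  have hshift := locoIdx_eq_locoIdx_snoc_false_add hc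
  rw [hc'_snoc] at hshift
  refine ⟨hc'.comp_castLE (Nat.le_succ m), ?_⟩
  rw [show (m : ℤ) - x = ((m - x : ℕ) : ℤ) by omega, Nex_natCast x (by omega),
    Nex_natCast x (by omega), show (fun i => c' (Fin.castSucc i)) = Fin.init c' from rfl, hshift,
    locoN_eq_locoN_sub_add (by omega)]
  push_cast
  ring
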